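/- In a finite directed acyclic graph G, suppose vertex X₂ has exactly one incident edge, namely X₁ → X₂. Let Y be a vertex and U a set of vertices with Y ∉ U, X₁ ∉ U, X₂ ∉ U, Y ∉ {X₁, X₂}. If X₂ and Y are d-separated by U in G, then X₁ and Y are d-separated by U in G. -/

import Mathlib

/-- Two vertices are adjacent if there is an edge in either direction. -/
def IsAdj {V : Type*} (E : V → V → Prop) (u v : V) : Prop := E u v ∨ E v u

/-- `w` is an interior (non-endpoint) vertex of the vertex list `l`. -/
def Interior {V : Type*} (l : List V) (w : V) : Prop :=
  ∃ u v, List.IsInfix [u, w, v] l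

/-- `w` is a collider on the vertex list `l`: both neighboring edges point into `w`. -/
def ColliderOn {V : Type*} (E : V → V → Prop) (l : List V) (w : V) : Prop :=
  ∃ u v, List.IsInfix [u, w, v] l ∧ E u w ∧ E v w

/-- `d` is a descendant of `w` (via a directed path, possibly trivial). -/
def Descendant {V : Type*} (E : V → V → Prop) (w d : V) : Prop :=
  Relation.ReflTransGen E w d

/-- A path (as a list of vertices) is blocked by the set `U`. -/
def Blocked {V : Type*} (E : V → V → Prop) (U : Set V) (l : List V) : Prop :=
  (∃ w, Interior l w ∧ ¬ ColliderOn E l w ∧ w ∈ U) ∨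
  (∃ w, Interior l w ∧ ColliderOn E l w ∧ w ∉ U ∧
    ∀ d, Descendant E w d → d ∉ U)

/-- `a` and `b` are d-separated by `U`: every path between them is blocked. -/
def DSep {V : Type*} (E : V → V → Prop) (U : Set V) (a b : V) : Prop :=
  ∀ l : List V, l.Nodup → l.Chain' (IsAdj E) →
    l.head? = some a → l.getLast? = some b → Blocked E U l

/-!
Prepend `X₂` to a path `X₁ ⋯ Y`. This is again a path, since a vertex whose only neighbour
is `X₁` cannot be an interior vertex of a path through `X₁`, so by hypothesis it is blocked.
The only new interior vertex is `X₁`, which is not in `U` and is not a collider (there is no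
edge `X₂ → X₁`), and the collider status of every other vertex is unchanged; hence the
blocking vertex already blocks the original path.
-/

section

variable {V : Type*}

lemma interior_of_mem {l : List V} {w : V} (hw : w ∈ l) (hhead : l.head? ≠ some w)
    (hlast : l.getLast? ≠ some w) : Interior l w := by
  obtain ⟨s, r, rfl⟩ := List.append_of_mem hw
  rcases List.eq_nil_or_concat s with rfl | ⟨s, u, rfl⟩
  · simp at hhead
  rcases r with _ | ⟨v, r⟩
  · simp at hlast
  exact ⟨u, v, s, r, by simp⟩

lemma not_interior_of_forall_adj_eq {E : V → V → Prop} {l : List V} {p x : V}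
    (hnd : l.Nodup) (hch : l.IsChain (IsAdj E)) (hp : ∀ v, IsAdj E v p → v = x) :
    ¬ Interior l p := by
  rintro ⟨u, v, hinf⟩
  have hadj : IsAdj E u p ∧ IsAdj E p v := by
    simpa using hch.infix hinf
  have hu : u = x := hp u hadj.1
  have hv : v = x := hp v hadj.2.symm
  simpa [hu, hv] using hinf.nodup hnd

lemma infix_triple_cons {a u w v x : V} {t : List V} (h : [u, w, v] <:+: a :: x :: t) :
    (u = a ∧ w = x) ∨ [u, w, v] <:+: x :: t := by
  rcases List.infix_cons_iff.mp h with h | h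
  · simp only [List.cons_prefix_cons] at h
    exact Or.inl ⟨h.1, h.2.1⟩
  · exact Or.inr h

lemma ColliderOn.cons {E : V → V → Prop} {l : List V} {w : V} (a : V) (h : ColliderOn E l w) :
    ColliderOn E (a :: l) w := by
  obtain ⟨u, v, hinf, hu, hv⟩ := h
  exact ⟨u, v, hinf.trans (List.suffix_cons a l).isInfix, hu, hv⟩

lemma Blocked.of_cons {E : V → V → Prop} {U : Set V} {a x : V} {t : List V}
    (hxU : x ∉ U) (hax : ¬ E a x) (h : Blocked E U (a :: x :: t)) : Blocked E U (x :: t) := by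
  rcases h with ⟨w, ⟨u, v, hinf⟩, hncol, hwU⟩ | ⟨w, -, ⟨u, v, hinf, hu, hv⟩, hwU, hdesc⟩
  · rcases infix_triple_cons hinf with ⟨-, rfl⟩ | hinf
    · exact absurd hwU hxU
    · exact Or.inl ⟨w, ⟨u, v, hinf⟩, fun hcol => hncol (hcol.cons a), hwU⟩
  · rcases infix_triple_cons hinf with ⟨rfl, rfl⟩ | hinf
    · exact absurd hu hax
    · exact Or.inr ⟨w, ⟨u, v, hinf⟩, ⟨u, v, hinf, hu, hv⟩, hwU, hdesc⟩

end

theorem dsep_transfer_along_pendant_edge_general {V : Type*}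
    (E : V → V → Prop)
    (X₁ X₂ Y : V) (U : Set V)
    (hedge : E X₁ X₂)
    (honly_in : ∀ v, E v X₂ → v = X₁)
    (hno_out : ∀ v, ¬ E X₂ v)
    (hX₁U : X₁ ∉ U)
    (hY2 : Y ≠ X₂)
    (hsep : DSep E U X₂ Y) :
    DSep E U X₁ Y := by
  intro l hnd hch hhead hlast
  obtain ⟨t, rfl⟩ := List.head?_eq_some_iff.mp hhead
  have hX₁₂ : X₁ ≠ X₂ := fun h => hno_out X₂ (h ▸ hedge)
  have hnbr : ∀ v, IsAdj E v X₂ → v = X₁ := fun v hv =>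
    hv.elim (honly_in v) (absurd · (hno_out v))
  have hX₂ : X₂ ∉ X₁ :: t := fun hmem =>
    not_interior_of_forall_adj_eq hnd hch hnbr
      (interior_of_mem hmem (by simpa using hX₁₂) (by simpa [hlast] using hY2))
  refine Blocked.of_cons hX₁U (hno_out X₁) (hsep _ (List.nodup_cons.mpr ⟨hX₂, hnd⟩) ?_ rfl ?_)
  · exact List.isChain_cons_cons.mpr ⟨Or.inr hedge, hch⟩
  · rwa [List.getLast?_cons_cons]

/-- If the only edge incident to X₂ is X₁ → X₂, then d-separation of X₂ from Y
by U transfers to d-separation of X₁ from Y by U. -/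
theorem dsep_transfer_along_pendant_edge {V : Type*} [Fintype V]
    (E : V → V → Prop) (hacyc : ∀ v, ¬ Relation.TransGen E v v)
    (X₁ X₂ Y : V) (U : Set V)
    (hedge : E X₁ X₂)
    (honly_in : ∀ v, E v X₂ → v = X₁)
    (hno_out : ∀ v, ¬ E X₂ v)
    (hYU : Y ∉ U) (hX₁U : X₁ ∉ U) (hX₂U : X₂ ∉ U)
    (hY1 : Y ≠ X₁) (hY2 : Y ≠ X₂)
    (hsep : DSep E U X₂ Y) :
    DSep E U X₁ Y :=
  dsep_transfer_along_pendant_edge_general E X₁ X₂ Y U hedge honly_in hno_out hX₁U hY2 hsep
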